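/- Let {B i j} be a non-degenerate LSSD(v,k,λ;w) with natural-number parameters, w ≥ 3, and μ > ν (μ-heavy), and set s := μ − ν. Then there exists f : Fin w → Fin v → EuclideanSpace ℝ (Fin (v−1)) such that each f i is a regular simplex, and for all i ≠ j and all a, b ∈ Fin v: ⟪f i a, f j b⟫ = (v−k)/((v−1)·s) if (B i j) a b = 1, and ⟪f i a, f j b⟫ = −k/((v−1)·s) if (B i j) a b = 0. That is, every LSSD gives rise to a set of w pairwise linked regular simplices in ℝ^(v−1). -/

import Mathlib

/-!
Fix a regular simplex `e` in `ℝ^(v-1)`, an index `i₀` and `s = μ - ν`; put `f i₀ = e` and, for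
`i ≠ i₀`, `f i a = s⁻¹ • ∑ c, B i₀ i c a • e c`. The Gram matrix of `e` is `(v • 1 - J) / (v - 1)`,
so every inner product among these vectors is read off from a matrix product `Mᵀ * N` of their
coefficient matrices, which the design and linking equations evaluate. Three parameter identities
make the values come out right: `k² = k - λ + λ v` and `k² = ν v + s k` (multiply the design and
linking equations by `J`), and `s² = k - λ`, obtained by expanding
`(B i h * B h j) * (B i h * B h j)ᵀ` once through the design equations and once through the
linking equation and comparing the coefficients of `1`. The last one is what makes each `f i` a
regular simplex, and it also forces `s ≠ 0`.
-/

open Matrix RealInnerProductSpace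

/-- The all-ones `v × v` real matrix. -/
def J (v : ℕ) : Matrix (Fin v) (Fin v) ℝ := Matrix.of fun _ _ => 1

/-- A linked system of symmetric designs `LSSD(v,k,λ;w)` with linking parameters `μ, ν`. -/
def IsLSSD (v w : ℕ) (k lam mu nu : ℝ)
    (B : Fin w → Fin w → Matrix (Fin v) (Fin v) ℝ) : Prop :=
  (∀ i j : Fin w, i ≠ j → ∀ a b : Fin v, B i j a b = 0 ∨ B i j a b = 1) ∧
  (∀ i j : Fin w, i ≠ j → B j i = (B i j)ᵀ) ∧
  (∀ i j : Fin w, i ≠ j →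
    B i j * (B i j)ᵀ = (k - lam) • (1 : Matrix (Fin v) (Fin v) ℝ) + lam • J v ∧
    (B i j)ᵀ * B i j = (k - lam) • (1 : Matrix (Fin v) (Fin v) ℝ) + lam • J v) ∧
  (∀ h i j : Fin w, h ≠ i → h ≠ j → i ≠ j →
    B i h * B h j = nu • J v + (mu - nu) • B i j)

/-- A regular simplex in `ℝ^(v-1)`: a family of `v` unit vectors with pairwise
inner products `-1/(v-1)`. -/
def IsRegularSimplex (v : ℕ) (a : Fin v → EuclideanSpace ℝ (Fin (v - 1))) : Prop :=
  (∀ i, ‖a i‖ = 1) ∧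
  ∀ i j, i ≠ j → ⟪a i, a j⟫ = -1 / ((v : ℝ) - 1)

@[simp]
theorem J_apply (v : ℕ) (a b : Fin v) : J v a b = 1 := rfl

theorem transpose_J (v : ℕ) : (J v)ᵀ = J v := rfl

theorem J_mul_J (v : ℕ) : J v * J v = (v : ℝ) • J v := by
  ext a b
  simp [Matrix.mul_apply]

theorem smul_J_injective {v : ℕ} (hv : 0 < v) : Function.Injective fun c : ℝ => c • J v := by
  intro c d h
  simpa using congrFun (congrFun h ⟨0, hv⟩) ⟨0, hv⟩

theorem eq_of_smul_one_add_smul_J_eq {v : ℕ} (hv : 2 ≤ v) {a b c d : ℝ}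
    (h : a • (1 : Matrix (Fin v) (Fin v) ℝ) + b • J v = c • 1 + d • J v) : a = c := by
  have h00 := congrFun (congrFun h ⟨0, by omega⟩) ⟨0, by omega⟩
  have h01 := congrFun (congrFun h ⟨0, by omega⟩) ⟨1, by omega⟩
  simp only [Matrix.add_apply, Matrix.smul_apply, one_apply_eq, one_apply_ne, ne_eq,
    Fin.mk.injEq, zero_ne_one, not_false_eq_true, J_apply, smul_eq_mul, mul_one, mul_zero,
    zero_add] at h00 h01
  linarith

def IsSymmetricDesign (v : ℕ) (k lam : ℝ) (M : Matrix (Fin v) (Fin v) ℝ) : Prop :=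
  (∀ a b, M a b = 0 ∨ M a b = 1) ∧
  M * Mᵀ = (k - lam) • (1 : Matrix (Fin v) (Fin v) ℝ) + lam • J v ∧
  Mᵀ * M = (k - lam) • (1 : Matrix (Fin v) (Fin v) ℝ) + lam • J v

namespace IsSymmetricDesign

variable {v : ℕ} {k lam : ℝ} {M : Matrix (Fin v) (Fin v) ℝ}

theorem transpose (hM : IsSymmetricDesign v k lam M) : IsSymmetricDesign v k lam Mᵀ :=
  ⟨fun a b => hM.1 b a, by rw [transpose_transpose]; exact hM.2.2,
    by rw [transpose_transpose]; exact hM.2.1⟩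

theorem mul_J (hM : IsSymmetricDesign v k lam M) : M * J v = k • J v := by
  ext a b
  have hdiag := congrFun (congrFun hM.2.1 a) a
  have hsq : ∀ c, M a c * M a c = M a c := fun c => by rcases hM.1 a c with h | h <;> simp [h]
  simp only [mul_apply, transpose_apply, hsq] at hdiag
  simpa [mul_apply] using hdiag

theorem J_mul (hM : IsSymmetricDesign v k lam M) : J v * M = k • J v := by
  rw [← transpose_transpose (J v * M), transpose_mul, transpose_J, hM.transpose.mul_J,
    transpose_smul, transpose_J]

theorem mul_self_eq (hv : 0 < v) (hM : IsSymmetricDesign v k lam M) :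
    k * k = k - lam + lam * v := by
  apply smul_J_injective hv
  calc (k * k) • J v = J v * Mᵀ * M := by
        rw [hM.transpose.J_mul, Matrix.smul_mul, hM.J_mul, smul_smul]
    _ = J v * (Mᵀ * M) := Matrix.mul_assoc ..
    _ = (k - lam + lam * v) • J v := by
        rw [hM.2.2, Matrix.mul_add, Matrix.mul_smul, Matrix.mul_smul, Matrix.mul_one, J_mul_J,
          smul_smul, ← add_smul]

theorem lam_lt (hk : 0 < k) (hkv : k < v) (hM : IsSymmetricDesign v k lam M) : lam < k := by
  have hv : 0 < v := by exact_mod_cast hk.trans hkv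
  have h : (k - lam) * (v - 1) = k * (v - k) := by linear_combination hM.mul_self_eq hv
  have hv1 : (0 : ℝ) ≤ v - 1 := by
    have : (1 : ℝ) ≤ v := by exact_mod_cast hv
    linarith
  exact sub_pos.1 (pos_of_mul_pos_left (h ▸ mul_pos hk (sub_pos.2 hkv)) hv1)

end IsSymmetricDesign

section ColComb

variable {ι κ κ' E : Type*} [Fintype ι]

def colComb [AddCommMonoid E] [Module ℝ E] (e : ι → E) (M : Matrix ι κ ℝ) (a : κ) : E :=
  ∑ c, M c a • e c

theorem colComb_one [AddCommMonoid E] [Module ℝ E] [DecidableEq ι] (e : ι → E) :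
    colComb e (1 : Matrix ι ι ℝ) = e := by
  funext a
  simp [colComb, one_apply]

theorem inner_colComb_colComb [NormedAddCommGroup E] [InnerProductSpace ℝ E] (e : ι → E)
    (M : Matrix ι κ ℝ) (N : Matrix ι κ' ℝ) (a : κ) (b : κ') :
    ⟪colComb e M a, colComb e N b⟫ = (Mᵀ * gram ℝ e * N) a b := by
  rw [colComb, colComb, ← star_dotProduct_gram_mulVec]
  simp only [Matrix.mul_apply, dotProduct, mulVec, Finset.mul_sum, Finset.sum_mul,
    transpose_apply, star_trivial, gram_apply]
  rw [Finset.sum_comm]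
  simp only [mul_comm, mul_left_comm]

end ColComb

section RegularSimplex

variable {v : ℕ}

theorem isRegularSimplex_iff_gram (hv : 2 ≤ v) {e : Fin v → EuclideanSpace ℝ (Fin (v - 1))} :
    IsRegularSimplex v e ↔ gram ℝ e = ((v : ℝ) - 1)⁻¹ • ((v : ℝ) • 1 - J v) := by
  have hv1 : (v : ℝ) - 1 ≠ 0 := by
    have : (2 : ℝ) ≤ v := by exact_mod_cast hv
    linarith
  have hentry : ∀ a b, (((v : ℝ) - 1)⁻¹ • ((v : ℝ) • 1 - J v)) a b
      = if a = b then 1 else -1 / ((v : ℝ) - 1) := by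
    intro a b
    simp only [Matrix.smul_apply, Matrix.sub_apply, one_apply, J_apply, smul_eq_mul]
    split_ifs
    · field_simp
    · ring
  simp only [← Matrix.ext_iff, gram_apply, hentry, IsRegularSimplex]
  constructor
  · rintro ⟨hnorm, hinner⟩ a b
    split_ifs with hab
    · simp [hab, hnorm]
    · exact hinner a b hab
  · intro h
    refine ⟨fun a => ?_, fun a b hab => by simpa [hab] using h a b⟩
    have := h a a
    rw [if_pos rfl, real_inner_self_eq_norm_sq] at this
    exact (pow_eq_one_iff_of_nonneg (norm_nonneg _) two_ne_zero).1 this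

/-- The standard basis of `ℝ^v`, projected onto the hyperplane orthogonal to the all-ones vector,
rescaled, and carried to `ℝ^(v-1)` by an orthonormal basis of that hyperplane. -/
theorem exists_isRegularSimplex (hv : 2 ≤ v) :
    ∃ e : Fin v → EuclideanSpace ℝ (Fin (v - 1)), IsRegularSimplex v e := by
  have hv' : (2 : ℝ) ≤ v := by exact_mod_cast hv
  have : Fact (Module.finrank ℝ (EuclideanSpace ℝ (Fin v)) = (v - 1) + 1) :=
    ⟨by rw [finrank_euclideanSpace_fin]; omega⟩
  set ones : EuclideanSpace ℝ (Fin v) := WithLp.toLp 2 fun _ => 1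
  have hones : ∀ a, ⟪ones, EuclideanSpace.single a (1 : ℝ)⟫ = 1 := fun a => by
    simp [ones, EuclideanSpace.inner_single_right]
  have hones_ones : ⟪ones, ones⟫ = v := by rw [PiLp.inner_apply]; simp [ones]
  have hones0 : ones ≠ 0 := fun h => by
    rw [h, inner_zero_left] at hones_ones
    linarith
  let u : Fin v → EuclideanSpace ℝ (Fin v) :=
    fun a => EuclideanSpace.single a 1 - (v : ℝ)⁻¹ • ones
  have hu : ∀ a, u a ∈ (ℝ ∙ ones)ᗮ := fun a => by
    rw [Submodule.mem_orthogonal_singleton_iff_inner_right, inner_sub_right, inner_smul_right,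
      hones, hones_ones]
    field_simp
    ring
  have hinner_u : ∀ a b, ⟪u a, u b⟫ = (1 : Matrix (Fin v) (Fin v) ℝ) a b - (v : ℝ)⁻¹ := by
    intro a b
    have hsingle : ⟪EuclideanSpace.single a (1 : ℝ), EuclideanSpace.single b 1⟫
        = (1 : Matrix (Fin v) (Fin v) ℝ) a b := by
      simp [EuclideanSpace.inner_single_left, one_apply]
    simp only [u, inner_sub_left, inner_sub_right, real_inner_smul_left, real_inner_smul_right,
      hones, real_inner_comm ones, hones_ones, hsingle]
    field_simp
    ring
  set c := √((v : ℝ) / (v - 1))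
  have hc : c * c = v / (v - 1) := Real.mul_self_sqrt (div_nonneg (by linarith) (by linarith))
  let φ := (OrthonormalBasis.fromOrthogonalSpanSingleton (𝕜 := ℝ) (v - 1) hones0).repr
  refine ⟨fun a => φ ⟨c • u a, Submodule.smul_mem _ _ (hu a)⟩,
    (isRegularSimplex_iff_gram hv).2 ?_⟩
  ext a b
  rw [gram_apply, φ.inner_map_map, Submodule.coe_inner, real_inner_smul_left,
    real_inner_smul_right, hinner_u, ← mul_assoc, hc]
  simp only [Matrix.smul_apply, Matrix.sub_apply, J_apply, smul_eq_mul]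
  field_simp

end RegularSimplex

namespace IsRegularSimplex

variable {v : ℕ} {e : Fin v → EuclideanSpace ℝ (Fin (v - 1))} {k lam s : ℝ}
  {M N : Matrix (Fin v) (Fin v) ℝ}

theorem inner_colComb (hv : 2 ≤ v) (he : IsRegularSimplex v e) {σ τ : ℝ}
    (hM : J v * M = σ • J v) (hN : J v * N = τ • J v) (a b : Fin v) :
    ⟪colComb e M a, colComb e N b⟫ = (v * (Mᵀ * N) a b - σ * τ) / (v - 1) := by
  have hMJ : Mᵀ * J v = σ • J v := by
    rw [← transpose_J, ← transpose_mul, hM, transpose_smul]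
  rw [inner_colComb_colComb, (isRegularSimplex_iff_gram hv).1 he, Matrix.mul_smul,
    Matrix.smul_mul, Matrix.mul_sub, Matrix.sub_mul, Matrix.mul_smul, Matrix.smul_mul,
    Matrix.mul_one, hMJ, Matrix.smul_mul, hN, smul_smul]
  simp only [Matrix.smul_apply, Matrix.sub_apply, J_apply, smul_eq_mul]
  field_simp

theorem isRegularSimplex_colComb (hv : 2 ≤ v) (he : IsRegularSimplex v e) {σ t : ℝ}
    (hM : J v * M = σ • J v) (hMM : Mᵀ * M = 1 + t • J v) (ht : v * t = σ * σ - 1) :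
    IsRegularSimplex v (colComb e M) := by
  refine (isRegularSimplex_iff_gram hv).2 (Matrix.ext fun a b => ?_)
  rw [gram_apply, he.inner_colComb hv hM hM, hMM]
  simp only [Matrix.add_apply, Matrix.smul_apply, Matrix.sub_apply, J_apply, smul_eq_mul]
  rw [div_eq_inv_mul]
  congr 1
  linear_combination ht

theorem isRegularSimplex_colComb_smul (hv : 2 ≤ v) (he : IsRegularSimplex v e)
    (hM : IsSymmetricDesign v k lam M) (hs : s ^ 2 = k - lam) (hs0 : s ≠ 0) :
    IsRegularSimplex v (colComb e (s⁻¹ • M)) := by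
  refine he.isRegularSimplex_colComb hv (σ := s⁻¹ * k) (t := s⁻¹ * s⁻¹ * lam) ?_ ?_ ?_
  · rw [Matrix.mul_smul, hM.J_mul, smul_smul]
  · rw [transpose_smul, Matrix.smul_mul, Matrix.mul_smul, hM.2.2, ← hs]
    match_scalars <;> field_simp
  · have hk := hM.mul_self_eq (by omega)
    field_simp
    linarith

theorem inner_colComb_smul (hv : 2 ≤ v) (he : IsRegularSimplex v e) (hN : J v * N = k • J v)
    (a b : Fin v) : ⟪e a, colComb e (s⁻¹ • N) b⟫ = (v * N a b - k) / ((v - 1) * s) := by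
  rw [← congrFun (colComb_one e) a]
  rw [he.inner_colComb hv (σ := 1) (τ := s⁻¹ * k) (by rw [Matrix.mul_one, one_smul])
    (by rw [Matrix.mul_smul, hN, smul_smul])]
  simp only [transpose_one, Matrix.one_mul, Matrix.smul_apply, smul_eq_mul, div_eq_mul_inv,
    mul_inv]
  ring

theorem inner_colComb_smul_colComb_smul (hv : 2 ≤ v) (he : IsRegularSimplex v e) {nu : ℝ}
    {L : Matrix (Fin v) (Fin v) ℝ} (hM : J v * M = k • J v) (hN : J v * N = k • J v)
    (hMN : Mᵀ * N = nu • J v + s • L) (hk : k * k = nu * v + s * k) (hs0 : s ≠ 0)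
    (a b : Fin v) :
    ⟪colComb e (s⁻¹ • M) a, colComb e (s⁻¹ • N) b⟫ = (v * L a b - k) / ((v - 1) * s) := by
  have hv1 : (v : ℝ) - 1 ≠ 0 := by
    have : (2 : ℝ) ≤ v := by exact_mod_cast hv
    linarith
  rw [he.inner_colComb hv (σ := s⁻¹ * k) (τ := s⁻¹ * k) (by rw [Matrix.mul_smul, hM, smul_smul])
    (by rw [Matrix.mul_smul, hN, smul_smul]), transpose_smul, Matrix.smul_mul, Matrix.mul_smul,
    hMN]
  simp only [Matrix.smul_apply, Matrix.add_apply, J_apply, smul_eq_mul]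
  field_simp
  linear_combination -hk

end IsRegularSimplex

noncomputable def linkedSimplices {v w : ℕ} {E : Type*} [AddCommMonoid E] [Module ℝ E]
    (e : Fin v → E) (B : Fin w → Fin w → Matrix (Fin v) (Fin v) ℝ) (s : ℝ) (i₀ i : Fin w) :
    Fin v → E :=
  if i = i₀ then e else colComb e (s⁻¹ • B i₀ i)

namespace IsLSSD

variable {v w : ℕ} {k lam mu nu : ℝ} {B : Fin w → Fin w → Matrix (Fin v) (Fin v) ℝ}
  {e : Fin v → EuclideanSpace ℝ (Fin (v - 1))}

theorem isSymmetricDesign (hB : IsLSSD v w k lam mu nu B) {i j : Fin w} (hij : i ≠ j) :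
    IsSymmetricDesign v k lam (B i j) :=
  ⟨hB.1 i j hij, hB.2.2.1 i j hij⟩

theorem transpose_eq (hB : IsLSSD v w k lam mu nu B) {i j : Fin w} (hij : i ≠ j) :
    (B i j)ᵀ = B j i :=
  (hB.2.1 i j hij).symm

theorem mul_eq_smul_J_add (hB : IsLSSD v w k lam mu nu B) {h i j : Fin w} (hhi : h ≠ i)
    (hhj : h ≠ j) (hij : i ≠ j) : B i h * B h j = nu • J v + (mu - nu) • B i j :=
  hB.2.2.2 h i j hhi hhj hij

theorem mul_self_eq (hB : IsLSSD v w k lam mu nu B) (hv : 0 < v) {h i j : Fin w}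
    (hhi : h ≠ i) (hhj : h ≠ j) (hij : i ≠ j) : k * k = nu * v + (mu - nu) * k := by
  apply smul_J_injective hv
  calc (k * k) • J v = J v * B i h * B h j := by
        rw [(hB.isSymmetricDesign hhi.symm).J_mul, Matrix.smul_mul,
          (hB.isSymmetricDesign hhj).J_mul, smul_smul]
    _ = J v * (nu • J v + (mu - nu) • B i j) := by
        rw [Matrix.mul_assoc, hB.mul_eq_smul_J_add hhi hhj hij]
    _ = (nu * v + (mu - nu) * k) • J v := by
        rw [Matrix.mul_add, Matrix.mul_smul, Matrix.mul_smul, J_mul_J,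
          (hB.isSymmetricDesign hij).J_mul, smul_smul, smul_smul, ← add_smul]

theorem sq_sub_eq (hB : IsLSSD v w k lam mu nu B) (hv : 2 ≤ v) (hk : 0 < k) (hkv : k < v)
    {h i j : Fin w} (hhi : h ≠ i) (hhj : h ≠ j) (hij : i ≠ j) : (mu - nu) ^ 2 = k - lam := by
  have dih := hB.isSymmetricDesign hhi.symm
  have dhj := hB.isSymmetricDesign hhj
  have dij := hB.isSymmetricDesign hij
  set D := B i h * B h j with hD
  have hD₁ : D * Dᵀ = ((k - lam) * (k - lam)) • (1 : Matrix (Fin v) (Fin v) ℝ)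
      + ((k - lam) * lam + lam * (k * k)) • J v := by
    rw [hD, transpose_mul, Matrix.mul_assoc, ← Matrix.mul_assoc (B h j), dhj.2.1]
    simp only [Matrix.add_mul, Matrix.mul_add, Matrix.smul_mul, Matrix.mul_smul, Matrix.one_mul,
      dih.mul_J, dih.2.1, dih.transpose.J_mul]
    module
  have hD₂ : D * Dᵀ = ((mu - nu) ^ 2 * (k - lam)) • (1 : Matrix (Fin v) (Fin v) ℝ)
      + (nu * nu * v + 2 * nu * (mu - nu) * k + (mu - nu) ^ 2 * lam) • J v := by
    rw [hD, hB.mul_eq_smul_J_add hhi hhj hij, transpose_add, transpose_smul, transpose_smul,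
      transpose_J, hB.transpose_eq hij]
    simp only [Matrix.add_mul, Matrix.mul_add, Matrix.smul_mul, Matrix.mul_smul, J_mul_J,
      dij.mul_J, dij.transpose.J_mul, ← hB.transpose_eq hij, dij.2.1]
    module
  have hsq := eq_of_smul_one_add_smul_J_eq hv (hD₁.symm.trans hD₂)
  exact (mul_right_cancel₀ (sub_pos.2 (dij.lam_lt hk hkv)).ne' hsq).symm

theorem isRegularSimplex_linkedSimplices (hB : IsLSSD v w k lam mu nu B) (hv : 2 ≤ v)
    (he : IsRegularSimplex v e) (hs : (mu - nu) ^ 2 = k - lam) (hs0 : mu - nu ≠ 0)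
    (i₀ i : Fin w) : IsRegularSimplex v (linkedSimplices e B (mu - nu) i₀ i) := by
  unfold linkedSimplices
  split_ifs with hi
  · exact he
  · exact he.isRegularSimplex_colComb_smul hv (hB.isSymmetricDesign (Ne.symm hi)) hs hs0

theorem inner_linkedSimplices (hB : IsLSSD v w k lam mu nu B) (hv : 2 ≤ v)
    (he : IsRegularSimplex v e) (hk : k * k = nu * v + (mu - nu) * k) (hs0 : mu - nu ≠ 0)
    (i₀ : Fin w) {i j : Fin w} (hij : i ≠ j) (a b : Fin v) :
    ⟪linkedSimplices e B (mu - nu) i₀ i a, linkedSimplices e B (mu - nu) i₀ j b⟫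
      = (v * B i j a b - k) / ((v - 1) * (mu - nu)) := by
  unfold linkedSimplices
  by_cases hi : i = i₀ <;> by_cases hj : j = i₀
  · exact absurd (hi.trans hj.symm) hij
  · subst hi
    rw [if_pos rfl, if_neg hj]
    exact he.inner_colComb_smul hv (hB.isSymmetricDesign hij).J_mul a b
  · subst hj
    rw [if_neg hi, if_pos rfl, real_inner_comm,
      he.inner_colComb_smul hv (hB.isSymmetricDesign hij.symm).J_mul, ← hB.transpose_eq hij.symm]
    rfl
  · rw [if_neg hi, if_neg hj]
    refine he.inner_colComb_smul_colComb_smul hv (hB.isSymmetricDesign (Ne.symm hi)).J_mul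
      (hB.isSymmetricDesign (Ne.symm hj)).J_mul ?_ hk hs0 a b
    rw [hB.transpose_eq (Ne.symm hi)]
    exact hB.mul_eq_smul_J_add (Ne.symm hi) (Ne.symm hj) hij

end IsLSSD

theorem stmt_8_general (v w k lam mu nu : ℕ) (hw : 3 ≤ w)
    (hk1 : 1 < k) (hkv : k < v - 1)
    (B : Fin w → Fin w → Matrix (Fin v) (Fin v) ℝ)
    (hB : IsLSSD v w (k : ℝ) (lam : ℝ) (mu : ℝ) (nu : ℝ) B) :
    ∃ f : Fin w → Fin v → EuclideanSpace ℝ (Fin (v - 1)),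
      (∀ i, IsRegularSimplex v (f i)) ∧
      ∀ i j : Fin w, i ≠ j → ∀ a b : Fin v,
        (B i j a b = 1 →
          ⟪f i a, f j b⟫ = ((v : ℝ) - k) / (((v : ℝ) - 1) * ((mu : ℝ) - nu))) ∧
        (B i j a b = 0 →
          ⟪f i a, f j b⟫ = -(k : ℝ) / (((v : ℝ) - 1) * ((mu : ℝ) - nu))) := by
  have hw' : 2 < Fintype.card (Fin w) := by rwa [Fintype.card_fin]
  obtain ⟨h, i, j, hhi, hhj, hij⟩ := Fintype.two_lt_card_iff.1 hw'
  have hv : 2 ≤ v := by omega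
  have hk0 : (0 : ℝ) < k := by exact_mod_cast (by omega : 0 < k)
  have hkv' : (k : ℝ) < v := by exact_mod_cast (by omega : k < v)
  have hs := hB.sq_sub_eq hv hk0 hkv' hhi hhj hij
  have hs0 : (mu : ℝ) - nu ≠ 0 := fun h0 => by
    rw [h0] at hs
    linarith [(hB.isSymmetricDesign hij).lam_lt hk0 hkv']
  have hk := hB.mul_self_eq (by omega) hhi hhj hij
  obtain ⟨e, he⟩ := exists_isRegularSimplex hv
  refine ⟨linkedSimplices e B (mu - nu) h, hB.isRegularSimplex_linkedSimplices hv he hs hs0 h,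
    fun i j hij a b => ⟨fun h1 => ?_, fun h0 => ?_⟩⟩
  · rw [hB.inner_linkedSimplices hv he hk hs0 h hij, h1, mul_one]
  · rw [hB.inner_linkedSimplices hv he hk hs0 h hij, h0, mul_zero, zero_sub]

theorem stmt_8 (v w k lam mu nu : ℕ) (hw : 3 ≤ w)
    (hk1 : 1 < k) (hkv : k < v - 1) (hmn : nu < mu)
    (B : Fin w → Fin w → Matrix (Fin v) (Fin v) ℝ)
    (hB : IsLSSD v w (k : ℝ) (lam : ℝ) (mu : ℝ) (nu : ℝ) B) :
    ∃ f : Fin w → Fin v → EuclideanSpace ℝ (Fin (v - 1)),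
      (∀ i, IsRegularSimplex v (f i)) ∧
      ∀ i j : Fin w, i ≠ j → ∀ a b : Fin v,
        (B i j a b = 1 →
          ⟪f i a, f j b⟫ = ((v : ℝ) - k) / (((v : ℝ) - 1) * ((mu : ℝ) - nu))) ∧
        (B i j a b = 0 →
          ⟪f i a, f j b⟫ = -(k : ℝ) / (((v : ℝ) - 1) * ((mu : ℝ) - nu))) :=
  stmt_8_general v w k lam mu nu hw hk1 hkv B hB
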